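/- (Serfling's inequality for sampling without replacement) Let k₁,...,k_N ∈ {0,1} with mean K = (1/N)Σ k_i. Draw a uniformly random sample of size n without replacement, with sample mean X. Then for k = N − n and any 0 ≤ β ≤ 1, Pr[X ≥ K + β] ≤ exp(−2β²nN/(k+1)). -/

import Mathlib

/-!
Let `μ` be the mean of `f` over the population `u`, `N = #u`, and for a sample `S` of size
`m < N` put `Z S = (∑ i ∈ S, f i - m μ) / (N - m)`. Adding to `S` a uniformly random element `i`
of `u \ S` changes `Z` by `(f i - mean of f on u \ S) / (N - m - 1)`, a centred increment with
values in an interval of length `(b - a) / (N - m - 1)`: `Z` is a martingale along the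
sample-building process. Hoeffding's lemma at each of the `n` steps bounds the moment generating
function of `Z` over a uniform `n`-subset by `exp ((b - a)² λ² / 8 · ∑_{j=N-n}^{N-1} 1 / j²)`,
and that sum is at most `n (k + 1) / (N k²)` with `k = N - n`. The event `X ≥ μ + β` is
`Z ≥ n β / k`, and the Chernoff bound with the optimal `λ` gives
`exp (-2 β² n N / ((k + 1) (b - a)²))`.
-/

open Finset Real

open MeasureTheory ProbabilityTheory in
lemma sum_exp_mul_sub_average_le {ι : Type*} (s : Finset ι) (hs : s.Nonempty) (x : ι → ℝ)
    {a b : ℝ} (hx : ∀ i ∈ s, x i ∈ Set.Icc a b) (t : ℝ) :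
    ∑ i ∈ s, exp (t * (x i - (∑ j ∈ s, x j) / #s)) ≤ #s * exp ((b - a) ^ 2 * t ^ 2 / 8) := by
  let _ : MeasurableSpace s := ⊤
  have _ : Nonempty s := hs.to_subtype
  let μ := (PMF.uniformOfFintype s).toMeasure
  have average_eq {y : ι → ℝ} : ∫ i, y i ∂μ = (∑ j ∈ s, y j) / #s := by
    simp only [μ, PMF.integral_eq_sum, PMF.uniformOfFintype_apply, Fintype.card_coe]
    simp [sum_div, inv_mul_eq_div, sum_attach s (fun j => y j / #s)]
  have hoeffding := (hasSubgaussianMGF_of_mem_Icc (μ := μ) (X := fun i : s => x i)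
    Measurable.of_discrete.aemeasurable (.of_forall fun i => hx i i.2)).mgf_le t
  rw [mgf, average_eq, average_eq (y := fun i => exp (t * (x i - (∑ j ∈ s, x j) / #s))),
    div_le_iff₀' (by simpa using hs)] at hoeffding
  refine hoeffding.trans_eq ?_
  rw [NNReal.coe_pow, NNReal.coe_div, coe_nnnorm, Real.norm_eq_abs,
    NNReal.coe_ofNat, div_pow, sq_abs]
  congr 2
  ring

lemma sum_powersetCard_succ_mul {α M : Type*} [DecidableEq α] [AddCommMonoid M] (u : Finset α)
    (n : ℕ) (g : Finset α → M) :
    (n + 1) • ∑ S ∈ u.powersetCard (n + 1), g S =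
      ∑ T ∈ u.powersetCard n, ∑ i ∈ u \ T, g (insert i T) := by
  have hcard : (n + 1) • ∑ S ∈ u.powersetCard (n + 1), g S =
      ∑ S ∈ u.powersetCard (n + 1), ∑ _i ∈ S, g S := by
    rw [smul_sum]
    refine sum_congr rfl fun S hS => ?_
    rw [sum_const, (mem_powersetCard.1 hS).2]
  rw [hcard, sum_sigma', sum_sigma']
  refine sum_bij' (fun p _ => ⟨p.1.erase p.2, p.2⟩) (fun p _ => ⟨insert p.2 p.1, p.2⟩)
    ?_ ?_ ?_ ?_ ?_
  · rintro ⟨S, i⟩ h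
    simp only [mem_sigma, mem_powersetCard, mem_sdiff] at h ⊢
    exact ⟨⟨(erase_subset _ _).trans h.1.1, by rw [card_erase_of_mem h.2, h.1.2]; rfl⟩,
      h.1.1 h.2, notMem_erase _ _⟩
  · rintro ⟨T, i⟩ h
    simp only [mem_sigma, mem_powersetCard, mem_sdiff] at h ⊢
    exact ⟨⟨insert_subset h.2.1 h.1.1, by rw [card_insert_of_notMem h.2.2, h.1.2]⟩,
      mem_insert_self _ _⟩
  · rintro ⟨S, i⟩ h
    simp [insert_erase (mem_sigma.1 h).2]
  · rintro ⟨T, i⟩ h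
    simp [erase_insert (mem_sdiff.1 (mem_sigma.1 h).2).2]
  · rintro ⟨S, i⟩ h
    simp [insert_erase (mem_sigma.1 h).2]

-- Telescoping `1 / j ^ 2 ≤ (k + 1) / k * (1 / j - 1 / (j + 1))` for `j ≥ k`.
lemma sum_Ico_inv_sq_le {k N : ℕ} (hk : 1 ≤ k) (hkN : k ≤ N) :
    ∑ j ∈ Ico k N, ((j : ℝ) ^ 2)⁻¹ ≤ ((N : ℝ) - k) * (k + 1) / (N * k ^ 2) := by
  induction N, hkN using Nat.le_induction with
  | base => simp
  | succ N hkN ih =>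
    rw [sum_Ico_succ_top hkN]
    have hk' : (1 : ℝ) ≤ k := by exact_mod_cast hk
    have hkN' : (k : ℝ) ≤ N := by exact_mod_cast hkN
    have hN : (0 : ℝ) < N := by linarith
    calc _ ≤ ((N : ℝ) - k) * (k + 1) / (N * k ^ 2) + ((N : ℝ) ^ 2)⁻¹ := by gcongr
      _ ≤ _ := by
        push_cast
        rw [← one_div, div_add_div _ _ (by positivity) (by positivity),
          div_le_div_iff₀ (by positivity) (by positivity)]
        nlinarith [mul_nonneg (mul_nonneg (sub_nonneg.2 hkN') (by linarith : (0 : ℝ) ≤ k))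
          (mul_pos hN (mul_pos hN (by linarith : (0 : ℝ) < k))).le]

lemma card_filter_ge_le_exp_mul_sum_exp {ι : Type*} (s : Finset ι) (g : ι → ℝ) (r : ℝ) {l : ℝ}
    (hl : 0 ≤ l) :
    (#{x ∈ s | r ≤ g x} : ℝ) ≤ exp (-(l * r)) * ∑ x ∈ s, exp (l * g x) := by
  rw [mul_sum, card_eq_sum_ones, Nat.cast_sum, Nat.cast_one, sum_filter]
  refine sum_le_sum fun x _ => ?_
  split_ifs with h
  · rw [← exp_add, one_le_exp_iff]
    nlinarith
  · positivity

namespace Serfling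

variable {α : Type*} (u : Finset α) (f : α → ℝ)

-- At `S = u` the value is the junk `x / 0 = 0`; it is only used for `#S < #u`.
noncomputable def deviation (S : Finset α) : ℝ :=
  (∑ i ∈ S, f i - #S * ((∑ i ∈ u, f i) / #u)) / (#u - #S)

lemma deviation_insert [DecidableEq α] {T : Finset α} {i : α} (hT : T ⊆ u) (hi : i ∈ u \ T)
    (hTu : #T + 1 < #u) :
    deviation u f (insert i T) = deviation u f T +
      (f i - (∑ j ∈ u \ T, f j) / #(u \ T)) / ((#u : ℝ) - #T - 1) := by
  have hlt : (#T : ℝ) + 1 < #u := by exact_mod_cast hTu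
  have hu : (#u : ℝ) ≠ 0 := by linarith
  have h1 : (#u : ℝ) - #T - 1 ≠ 0 := by linarith
  have h2 : (#u : ℝ) - #T ≠ 0 := by linarith
  have h3 : (#u : ℝ) - (#T + 1) ≠ 0 := by linarith
  rw [deviation, deviation, sum_insert (mem_sdiff.1 hi).2, card_insert_of_notMem (mem_sdiff.1 hi).2,
    sum_sdiff_eq_sub hT, card_sdiff_of_subset hT, Nat.cast_sub (card_le_card hT)]
  push_cast
  field_simp
  ring

lemma sum_exp_deviation_insert_le [DecidableEq α] {a b : ℝ} (hf : ∀ i ∈ u, f i ∈ Set.Icc a b)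
    {T : Finset α} (hT : T ⊆ u) (hTu : #T + 1 < #u) (l : ℝ) :
    ∑ i ∈ u \ T, exp (l * deviation u f (insert i T)) ≤
      ((#u : ℝ) - #T) * exp ((b - a) ^ 2 * (l / ((#u : ℝ) - #T - 1)) ^ 2 / 8) *
        exp (l * deviation u f T) := by
  set t := l / ((#u : ℝ) - #T - 1) with ht
  have hne : (u \ T).Nonempty := by
    rw [← card_pos, card_sdiff_of_subset hT]; omega
  have hcard : (#(u \ T) : ℝ) = #u - #T := by
    rw [card_sdiff_of_subset hT, Nat.cast_sub (card_le_card hT)]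
  calc ∑ i ∈ u \ T, exp (l * deviation u f (insert i T))
      = exp (l * deviation u f T) *
          ∑ i ∈ u \ T, exp (t * (f i - (∑ j ∈ u \ T, f j) / #(u \ T))) := by
        rw [mul_sum]
        refine sum_congr rfl fun i hi => ?_
        rw [deviation_insert u f hT hi hTu, ← exp_add, ht]
        congr 1
        ring
    _ ≤ exp (l * deviation u f T) * (#(u \ T) * exp ((b - a) ^ 2 * t ^ 2 / 8)) := by
        gcongr
        exact sum_exp_mul_sub_average_le _ hne f (fun i hi => hf i (mem_sdiff.1 hi).1) t
    _ = _ := by rw [hcard]; ring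

lemma sum_powersetCard_succ_exp_deviation_le [DecidableEq α] {a b : ℝ}
    (hf : ∀ i ∈ u, f i ∈ Set.Icc a b) (l : ℝ) {n : ℕ} (hn : n + 1 < #u) :
    ((n : ℝ) + 1) * ∑ S ∈ u.powersetCard (n + 1), exp (l * deviation u f S) ≤
      ((#u : ℝ) - n) * exp ((b - a) ^ 2 * (l / ((#u : ℝ) - n - 1)) ^ 2 / 8) *
        ∑ T ∈ u.powersetCard n, exp (l * deviation u f T) := by
  have hdc := sum_powersetCard_succ_mul u n (fun S => exp (l * deviation u f S))
  rw [nsmul_eq_mul, Nat.cast_add_one] at hdc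
  rw [hdc, mul_sum]
  refine sum_le_sum fun T hT => ?_
  obtain ⟨hTu, rfl⟩ := mem_powersetCard.1 hT
  exact sum_exp_deviation_insert_le u f hf hTu hn l

lemma sum_exp_deviation_le [DecidableEq α] {a b : ℝ} (hf : ∀ i ∈ u, f i ∈ Set.Icc a b) (l : ℝ) :
    ∀ n < #u, ∑ S ∈ u.powersetCard n, exp (l * deviation u f S) ≤
      (#u).choose n * exp ((b - a) ^ 2 * l ^ 2 / 8 * ∑ j ∈ Ico (#u - n) #u, ((j : ℝ) ^ 2)⁻¹)
  | 0, _ => by simp [deviation]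
  | n + 1, hn => by
    set E := exp ((b - a) ^ 2 * l ^ 2 / 8 * ∑ j ∈ Ico (#u - n) #u, ((j : ℝ) ^ 2)⁻¹)
    set e := exp ((b - a) ^ 2 * (l / ((#u : ℝ) - n - 1)) ^ 2 / 8)
    have hn' : (n : ℝ) + 1 < #u := by exact_mod_cast hn
    have hchoose : ((#u : ℝ) - n) * (#u).choose n = (n + 1) * (#u).choose (n + 1) := by
      have h := congrArg (Nat.cast : ℕ → ℝ) (Nat.choose_succ_right_eq (#u) n)
      push_cast [Nat.cast_sub (by omega : n ≤ #u)] at h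
      linarith
    have hexp : exp ((b - a) ^ 2 * l ^ 2 / 8 * ∑ j ∈ Ico (#u - (n + 1)) #u, ((j : ℝ) ^ 2)⁻¹) =
        e * E := by
      rw [sum_eq_sum_Ico_succ_bot (by omega), show #u - (n + 1) + 1 = #u - n by omega,
        Nat.cast_sub hn.le, Nat.cast_add_one, ← exp_add, sub_add_eq_sub_sub, div_pow]
      congr 1
      ring
    refine le_of_mul_le_mul_left ?_ (by positivity : (0 : ℝ) < n + 1)
    calc ((n : ℝ) + 1) * ∑ S ∈ u.powersetCard (n + 1), exp (l * deviation u f S)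
        ≤ ((#u : ℝ) - n) * e * ∑ T ∈ u.powersetCard n, exp (l * deviation u f T) :=
          sum_powersetCard_succ_exp_deviation_le u f hf l hn
      _ ≤ ((#u : ℝ) - n) * e * ((#u).choose n * E) := by
          gcongr
          · exact mul_nonneg (by linarith) (exp_pos _).le
          · exact sum_exp_deviation_le hf l n (by omega)
      _ = _ := by
          rw [hexp]
          linear_combination e * E * hchoose

lemma card_filter_deviation_ge_le [DecidableEq α] {a b : ℝ} (hf : ∀ i ∈ u, f i ∈ Set.Icc a b)
    {n : ℕ} (hn : n < #u) (r : ℝ) {l : ℝ} (hl : 0 ≤ l) :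
    (#{S ∈ u.powersetCard n | r ≤ deviation u f S} : ℝ) ≤ (#u).choose n *
      exp ((b - a) ^ 2 * l ^ 2 / 8 * (n * ((#u : ℝ) - n + 1) / (#u * ((#u : ℝ) - n) ^ 2)) -
        l * r) := by
  have hIco := sum_Ico_inv_sq_le (k := #u - n) (N := #u) (by omega) (by omega)
  rw [Nat.cast_sub hn.le, sub_sub_cancel] at hIco
  calc (#{S ∈ u.powersetCard n | r ≤ deviation u f S} : ℝ)
      ≤ exp (-(l * r)) * ∑ S ∈ u.powersetCard n, exp (l * deviation u f S) :=
        card_filter_ge_le_exp_mul_sum_exp _ _ r hl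
    _ ≤ exp (-(l * r)) * ((#u).choose n *
          exp ((b - a) ^ 2 * l ^ 2 / 8 * ∑ j ∈ Ico (#u - n) #u, ((j : ℝ) ^ 2)⁻¹)) := by
        gcongr
        exact sum_exp_deviation_le u f hf l n hn
    _ ≤ exp (-(l * r)) * ((#u).choose n *
          exp ((b - a) ^ 2 * l ^ 2 / 8 *
            (n * ((#u : ℝ) - n + 1) / (#u * ((#u : ℝ) - n) ^ 2)))) := by
        gcongr
    _ = _ := by
        rw [exp_sub, exp_neg, div_eq_mul_inv]
        ring

theorem card_filter_average_ge_le [DecidableEq α] {a b : ℝ} (hab : a < b)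
    (hf : ∀ i ∈ u, f i ∈ Set.Icc a b) {n : ℕ} (hn : 0 < n) (hnu : n ≤ #u) {β : ℝ} (hβ : 0 ≤ β) :
    (#{S ∈ u.powersetCard n | (∑ i ∈ u, f i) / #u + β ≤ (∑ i ∈ S, f i) / n} : ℝ) ≤
      (#u).choose n * exp (-(2 * β ^ 2 * n * #u) / ((b - a) ^ 2 * (((#u - n : ℕ) : ℝ) + 1))) := by
  rcases hnu.lt_or_eq with hlt | rfl
  · set k : ℝ := (#u : ℝ) - n
    have hk : 0 < k := sub_pos.2 (by exact_mod_cast hlt)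
    have hn' : (0 : ℝ) < n := by exact_mod_cast hn
    have hu : (0 : ℝ) < #u := by exact_mod_cast hn.trans hlt
    set r := n * β / k
    -- `B` bounds `∑_{j=k}^{#u-1} 1 / j²`, and `l = 4 r / ((b - a)² B)` minimises
    -- `(b - a)² l² B / 8 - l r`.
    set B := n * (k + 1) / (#u * k ^ 2)
    have hevent : {S ∈ u.powersetCard n | (∑ i ∈ u, f i) / #u + β ≤ (∑ i ∈ S, f i) / n} ⊆
        {S ∈ u.powersetCard n | r ≤ deviation u f S} := by
      intro S hS
      simp only [mem_filter, mem_powersetCard] at hS ⊢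
      obtain ⟨⟨hSu, hSn⟩, hS⟩ := hS
      refine ⟨⟨hSu, hSn⟩, ?_⟩
      rw [deviation, hSn]
      refine div_le_div_of_nonneg_right ?_ hk.le
      rw [le_div_iff₀ hn'] at hS
      linarith
    calc (#{S ∈ u.powersetCard n | (∑ i ∈ u, f i) / #u + β ≤ (∑ i ∈ S, f i) / n} : ℝ)
        ≤ #{S ∈ u.powersetCard n | r ≤ deviation u f S} := by exact_mod_cast card_le_card hevent
      _ ≤ (#u).choose n * exp ((b - a) ^ 2 * (4 * r / ((b - a) ^ 2 * B)) ^ 2 / 8 * B -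
            4 * r / ((b - a) ^ 2 * B) * r) :=
        card_filter_deviation_ge_le u f hf hlt r (by positivity)
      _ = _ := by
        rw [Nat.cast_sub hlt.le]
        change _ = _ * exp (_ / ((b - a) ^ 2 * (k + 1)))
        congr 2
        have : b - a ≠ 0 := (sub_pos.2 hab).ne'
        have : k + 1 ≠ 0 := by positivity
        simp only [r, B]
        field_simp
        ring
  · rw [powersetCard_self, filter_singleton, Nat.choose_self, Nat.cast_one, one_mul]
    rcases hβ.eq_or_lt with rfl | hβ
    · split_ifs <;> simp
    · rw [if_neg (by linarith)]
      simp only [card_empty, Nat.cast_zero]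
      positivity

end Serfling

open scoped Classical in
theorem stmt_3_general (N n : ℕ) (hn : 0 < n) (hnN : n ≤ N) (f : Fin N → ℝ)
    (hf : ∀ i, f i = 0 ∨ f i = 1) (β : ℝ) (hβ0 : 0 ≤ β) :
    ((((Finset.univ : Finset (Fin N)).powersetCard n).filter fun S =>
        (∑ i ∈ S, f i) / (n : ℝ) ≥ (∑ i, f i) / (N : ℝ) + β).card : ℝ) /
      (((Finset.univ : Finset (Fin N)).powersetCard n).card : ℝ)
      ≤ Real.exp (-(2 * β ^ 2 * n * N) / (((N - n : ℕ) : ℝ) + 1)) := by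
  have hf01 : ∀ i ∈ (univ : Finset (Fin N)), f i ∈ Set.Icc 0 1 := fun i _ => by
    rcases hf i with h | h <;> simp [h]
  have h := Serfling.card_filter_average_ge_le univ f zero_lt_one hf01 hn (by simpa) hβ0
  rw [card_univ, Fintype.card_fin, sub_zero, one_pow, one_mul] at h
  rw [card_powersetCard, card_univ, Fintype.card_fin,
    div_le_iff₀' (by exact_mod_cast Nat.choose_pos hnN)]
  convert h using 4

open scoped Classical in
theorem stmt_3 (N n : ℕ) (hn : 0 < n) (hnN : n ≤ N) (f : Fin N → ℝ)
    (hf : ∀ i, f i = 0 ∨ f i = 1) (β : ℝ) (hβ0 : 0 ≤ β) (hβ1 : β ≤ 1) :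
    ((((Finset.univ : Finset (Fin N)).powersetCard n).filter fun S =>
        (∑ i ∈ S, f i) / (n : ℝ) ≥ (∑ i, f i) / (N : ℝ) + β).card : ℝ) /
      (((Finset.univ : Finset (Fin N)).powersetCard n).card : ℝ)
      ≤ Real.exp (-(2 * β ^ 2 * n * N) / (((N - n : ℕ) : ℝ) + 1)) :=
  stmt_3_general N n hn hnN f hf β hβ0
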